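/- Let G be a (P6, diamond)-free graph containing an induced 5-cycle v1v2v3v4v5, let C_{i,i+2} be the vertices outside the cycle adjacent exactly to v_i and v_{i+2} on the cycle, and A_{i+1} the vertices adjacent only to v_{i+1}. Then every vertex of C_{i,i+2} is anti-complete to every connected component of A_{i+1} containing at least two vertices. -/

import Mathlib

/-!
If `c ∈ C i` were adjacent to `a₁` in a component of `A (i + 1)` with at least two vertices,
pick a neighbour `a'` of `a₁` in that component. If `c ~ a'`, then `c, v (i + 1), a₁, a'` induce a
diamond (only `c` and `v (i + 1)` are non-adjacent); otherwise `a', a₁, c, v i, v (i - 1), v (i - 2)`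
is an induced `P₆`.
-/

open SimpleGraph

def diamond : SimpleGraph (Fin 4) := (⊤ : SimpleGraph (Fin 4)).deleteEdges {s(0, 1)}

namespace SimpleGraph

variable {V W : Type*} {G : SimpleGraph V} {H : SimpleGraph W}

theorem Reachable.exists_adj_of_ne {u w : V} (h : G.Reachable u w) (hne : u ≠ w) :
    ∃ x, G.Adj u x := by
  obtain ⟨p⟩ := h
  cases p with
  | nil => exact absurd rfl hne
  | cons hadj _ => exact ⟨_, hadj⟩

theorem forall_adj_iff_of_forall_lt_adj_iff [LinearOrder W] {f : W → V}
    (hf : ∀ x y, x < y → (G.Adj (f x) (f y) ↔ H.Adj x y)) :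
    ∀ x y, G.Adj (f x) (f y) ↔ H.Adj x y := by
  intro x y
  rcases lt_trichotomy x y with hxy | rfl | hxy
  · exact hf x y hxy
  · simp
  · rw [G.adj_comm, H.adj_comm]
    exact hf y x hxy

/-- A map reflecting adjacency can only fail to be injective on twins of `H`. -/
def Embedding.ofAdjIff (f : W → V) (hf : ∀ x y, G.Adj (f x) (f y) ↔ H.Adj x y)
    (htwin : ∀ x y, (∀ z, H.Adj x z ↔ H.Adj y z) → f x = f y → x = y) : H ↪g G where
  toFun := f
  inj' x y hxy := htwin x y (fun z => by rw [← hf, ← hf, hxy]) hxy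
  map_rel_iff' := hf _ _

theorem nonempty_diamond_embedding {a b c d : V} (hab : a ≠ b) (h_ab : ¬ G.Adj a b)
    (hac : G.Adj a c) (had : G.Adj a d) (hbc : G.Adj b c) (hbd : G.Adj b d)
    (hcd : G.Adj c d) : Nonempty (diamond ↪g G) := by
  refine ⟨Embedding.ofAdjIff ![a, b, c, d] ?_ ?_⟩
  · refine forall_adj_iff_of_forall_lt_adj_iff fun x y hxy => ?_
    fin_cases x <;> fin_cases y <;> simp_all [diamond]
  · intro x y htwin hxy
    fin_cases x <;> fin_cases y <;> simp_all [diamond]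

theorem eq_of_forall_pathGraph_six_adj_iff :
    ∀ x y : Fin 6, (∀ z, (pathGraph 6).Adj x z ↔ (pathGraph 6).Adj y z) → x = y := by
  simp only [pathGraph_adj]
  decide

theorem nonempty_pathGraph_six_embedding {x₀ x₁ x₂ x₃ x₄ x₅ : V}
    (h₀₁ : G.Adj x₀ x₁) (h₁₂ : G.Adj x₁ x₂) (h₂₃ : G.Adj x₂ x₃) (h₃₄ : G.Adj x₃ x₄)
    (h₄₅ : G.Adj x₄ x₅) (h₀₂ : ¬ G.Adj x₀ x₂) (h₀₃ : ¬ G.Adj x₀ x₃) (h₀₄ : ¬ G.Adj x₀ x₄)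
    (h₀₅ : ¬ G.Adj x₀ x₅) (h₁₃ : ¬ G.Adj x₁ x₃) (h₁₄ : ¬ G.Adj x₁ x₄) (h₁₅ : ¬ G.Adj x₁ x₅)
    (h₂₄ : ¬ G.Adj x₂ x₄) (h₂₅ : ¬ G.Adj x₂ x₅) (h₃₅ : ¬ G.Adj x₃ x₅) :
    Nonempty (pathGraph 6 ↪g G) := by
  refine ⟨Embedding.ofAdjIff ![x₀, x₁, x₂, x₃, x₄, x₅] ?_
    fun x y htwin _ => eq_of_forall_pathGraph_six_adj_iff x y htwin⟩
  refine forall_adj_iff_of_forall_lt_adj_iff fun x y hxy => ?_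
  fin_cases x <;> fin_cases y <;> simp_all [pathGraph_adj]

end SimpleGraph

theorem stmt_10_general {V : Type*} (G : SimpleGraph V)
    (hP6 : ¬ Nonempty (pathGraph 6 ↪g G))
    (hD : ¬ Nonempty (diamond ↪g G))
    (v : Fin 5 → V)
    (hC5 : ∀ i j, G.Adj (v i) (v j) ↔ j = i + 1 ∨ i = j + 1)
    (A : Fin 5 → Set V)
    (hA : ∀ i, A i = {u | u ∉ Set.range v ∧ ∀ j, G.Adj u (v j) ↔ j = i})
    (C : Fin 5 → Set V)
    (hC : ∀ i, C i = {u | u ∉ Set.range v ∧ ∀ j, G.Adj u (v j) ↔ (j = i ∨ j = i + 2)}) :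
    ∀ i, ∀ c ∈ C i, ∀ (a₁ : V) (h₁ : a₁ ∈ A (i + 1)) (a₂ : V) (h₂ : a₂ ∈ A (i + 1)),
      a₁ ≠ a₂ → (G.induce (A (i + 1))).Reachable ⟨a₁, h₁⟩ ⟨a₂, h₂⟩ → ¬ G.Adj c a₁ := by
  intro i c hc a₁ h₁ a₂ h₂ hne hreach hca₁
  obtain ⟨⟨a', ha'⟩, ha₁a'⟩ := hreach.exists_adj_of_ne (by simpa using hne)
  simp only [hA, hC, Set.mem_ofPred_eq] at hc h₁ ha'
  obtain ⟨hc_nv, hcv⟩ := hc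
  obtain ⟨-, ha₁v⟩ := h₁
  obtain ⟨-, ha'v⟩ := ha'
  by_cases hca' : G.Adj c a'
  · exact hD (nonempty_diamond_embedding (fun h => hc_nv ⟨_, h.symm⟩) (by simp [hcv]) hca₁ hca'
      ((ha₁v _).2 rfl).symm ((ha'v _).2 rfl).symm ha₁a')
  · exact hP6 (nonempty_pathGraph_six_embedding (x₀ := a') (x₁ := a₁) (x₂ := c) (x₃ := v i)
      (x₄ := v (i + 4)) (x₅ := v (i + 3))
      ha₁a'.symm hca₁.symm (by simp [hcv]) (by grind) (by grind) (fun h => hca' h.symm)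
      (by simp [ha'v]) (by simp [ha'v]) (by simp [ha'v]) (by simp [ha₁v]) (by simp [ha₁v])
      (by simp [ha₁v]) (by simp [hcv]) (by simp [hcv]) (by grind))

theorem stmt_10 {V : Type*} (G : SimpleGraph V)
    (hP6 : ¬ Nonempty (pathGraph 6 ↪g G))
    (hD : ¬ Nonempty (diamond ↪g G))
    (v : Fin 5 → V) (hv : Function.Injective v)
    (hC5 : ∀ i j, G.Adj (v i) (v j) ↔ j = i + 1 ∨ i = j + 1)
    (A : Fin 5 → Set V)
    (hA : ∀ i, A i = {u | u ∉ Set.range v ∧ ∀ j, G.Adj u (v j) ↔ j = i})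
    (C : Fin 5 → Set V)
    (hC : ∀ i, C i = {u | u ∉ Set.range v ∧ ∀ j, G.Adj u (v j) ↔ (j = i ∨ j = i + 2)}) :
    ∀ i, ∀ c ∈ C i, ∀ (a₁ : V) (h₁ : a₁ ∈ A (i + 1)) (a₂ : V) (h₂ : a₂ ∈ A (i + 1)),
      a₁ ≠ a₂ → (G.induce (A (i + 1))).Reachable ⟨a₁, h₁⟩ ⟨a₂, h₂⟩ → ¬ G.Adj c a₁ :=
  stmt_10_general G hP6 hD v hC5 A hA C hC
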